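/- Sum-set covering bound for the sharpness example: with P = {0, 1/N, …, (N-1)/N}, c chosen with s = log N/log(1/c) and c ≤ 1/N, and A the attractor of {x ↦ cx + p : p ∈ P}, for every η > 0 there exists N₀ such that for N ≥ N₀ and all sufficiently small δ > 0, N_δ(A+A) < δ^{-s-η} — equivalently the sumset A+A has box-counting numbers of exponent at most s + η. -/
import Mathlib

open Metric Finset Pointwise

/-- The finite set of "left endpoints at generation `k`": sums `Σ_{j<k} c^j · m_j · q`
with `m_j < M`. -/
noncomputable def genSet (c q : ℝ) (M : ℕ) : ℕ → Finset ℝ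
  | 0 => {0}
  | k+1 => (Finset.range M ×ˢ genSet c q M k).image fun p => c * p.2 + (p.1 : ℝ) * q

lemma genSet_card (c q : ℝ) (M : ℕ) : ∀ k, (genSet c q M k).card ≤ M ^ k := by
  intro k
  induction k with
  | zero => simp [genSet]
  | succ k ih =>
      calc (genSet c q M (k+1)).card ≤ (Finset.range M ×ˢ genSet c q M k).card :=
            Finset.card_image_le
        _ = M * (genSet c q M k).card := by simp
        _ ≤ M * M ^ k := Nat.mul_le_mul_left M ih
        _ = M ^ (k+1) := by ring

lemma genSet_add (c q : ℝ) (N : ℕ) (hN : 1 ≤ N) :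
    ∀ k, ∀ x ∈ genSet c q N k, ∀ y ∈ genSet c q N k,
      x + y ∈ genSet c q (2 * N - 1) k := by
  intro k
  induction k with
  | zero =>
      intro x hx y hy
      simp only [genSet, Finset.mem_singleton] at hx hy ⊢
      simp [hx, hy]
  | succ k ih =>
      intro x hx y hy
      simp only [genSet, Finset.mem_image, Finset.mem_product, Finset.mem_range] at hx hy ⊢
      obtain ⟨⟨i, x'⟩, ⟨hi, hx'⟩, rfl⟩ := hx
      obtain ⟨⟨j, y'⟩, ⟨hj, hy'⟩, rfl⟩ := hy
      refine ⟨⟨i + j, x' + y'⟩, ⟨by omega, ih _ hx' _ hy'⟩, ?_⟩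
      push_cast
      ring

/-- Sum-set covering bound for the sharpness example: for every `η > 0` there is `N₀`
such that for `N ≥ N₀`, the attractor `A` of the IFS `{x ↦ cx + i/N : 0 ≤ i < N}` with
`c ≤ 1/N` and `s = log N / log(1/c)` satisfies `N_δ(A+A) < δ^{-s-η}` for all
sufficiently small `δ > 0`. -/
theorem sumset_covering_bound (η : ℝ) (hη : 0 < η) :
    ∃ N₀ : ℕ, ∀ N : ℕ, N₀ ≤ N →
      ∀ (s c : ℝ), 0 < c → c ≤ 1 / N → s = Real.log N / Real.log (1 / c) →
      ∀ (A : Set ℝ), A.Nonempty → IsCompact A →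
        A = ⋃ i ∈ Finset.range N, (fun x => c * x + (i : ℝ) / N) '' A →
      ∃ δ₀ : ℝ, 0 < δ₀ ∧ ∀ δ : ℝ, 0 < δ → δ < δ₀ →
        ∃ t : Finset ℝ, (A + A ⊆ ⋃ x ∈ t, closedBall x δ) ∧
          (t.card : ℝ) < δ ^ (-(s + η)) := by
  refine ⟨max 4 (⌈Real.exp (2 * Real.log 2 / η)⌉₊ + 1), ?_⟩
  intro N hN s c hc hcN hs A hAne hAcomp hAeq
  have hN4 : 4 ≤ N := le_trans (le_max_left _ _) hN
  have hNR : (4:ℝ) ≤ (N:ℝ) := by exact_mod_cast hN4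
  have hN0 : (0:ℝ) < (N:ℝ) := by linarith
  have hexpN : Real.exp (2 * Real.log 2 / η) ≤ (N:ℝ) := by
    have h1 : ⌈Real.exp (2 * Real.log 2 / η)⌉₊ + 1 ≤ N := le_trans (le_max_right _ _) hN
    have h2 : Real.exp (2 * Real.log 2 / η) ≤ (⌈Real.exp (2 * Real.log 2 / η)⌉₊ : ℝ) :=
      Nat.le_ceil _
    have h3 : ((⌈Real.exp (2 * Real.log 2 / η)⌉₊ : ℕ) : ℝ) ≤ (N:ℝ) := by
      exact_mod_cast le_trans (Nat.le_succ _) h1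
    linarith
  have hc4 : c ≤ 1/4 := by
    refine le_trans hcN ?_
    rw [div_le_div_iff₀ hN0 (by norm_num)]
    linarith
  have hc1 : c < 1 := lt_of_le_of_lt hc4 (by norm_num)
  have hlogc : Real.log c < 0 := Real.log_neg hc hc1
  have hlog2 : (0:ℝ) < Real.log 2 := Real.log_pos (by norm_num)
  have hlogN : Real.log N ≤ -Real.log c := by
    have h := Real.log_le_log hc hcN
    rw [Real.log_div one_ne_zero (ne_of_gt hN0), Real.log_one] at h
    linarith
  have hlogN0 : 0 < Real.log N := Real.log_pos (by linarith)
  have hetaN : 2 * Real.log 2 ≤ η * Real.log N := by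
    have h := Real.log_le_log (Real.exp_pos _) hexpN
    rw [Real.log_exp, div_le_iff₀ hη] at h
    linarith
  have hL : 0 < -Real.log c := by linarith
  have hlog1c : Real.log (1 / c) = -Real.log c := by rw [one_div, Real.log_inv]
  have hsL : Real.log N = s * (-Real.log c) := by
    rw [hs, hlog1c, div_mul_cancel₀ _ (ne_of_gt hL)]
  have hs0 : 0 ≤ s := by
    rw [hs, hlog1c]
    positivity
  have hs1 : s ≤ 1 := by nlinarith
  -- A ⊆ [0, 2]
  have hAsub : A ⊆ ⋃ i ∈ Finset.range N, (fun x => c * x + (i : ℝ) / N) '' A := le_of_eq hAeq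
  have hbddA : BddAbove A := hAcomp.bddAbove
  have hbddB : BddBelow A := hAcomp.bddBelow
  have hA2 : ∀ a ∈ A, 0 ≤ a ∧ a ≤ 2 := by
    have hsup : sSup A ≤ 2 := by
      have hmem := hAsub (hAcomp.sSup_mem hAne)
      simp only [Set.mem_iUnion, Set.mem_image, Finset.mem_range] at hmem
      obtain ⟨i, hi, a, ha, hae⟩ := hmem
      have h1 : a ≤ sSup A := le_csSup hbddA ha
      have h2 : (i:ℝ) / N ≤ 1 := by
        rw [div_le_one hN0]
        exact_mod_cast Nat.le_of_lt hi
      nlinarith [hc1, hc]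
    have hinf : 0 ≤ sInf A := by
      have hmem := hAsub (hAcomp.sInf_mem hAne)
      simp only [Set.mem_iUnion, Set.mem_image, Finset.mem_range] at hmem
      obtain ⟨i, hi, a, ha, hae⟩ := hmem
      have h1 : sInf A ≤ a := csInf_le hbddB ha
      have h2 : (0:ℝ) ≤ (i:ℝ) / N := by positivity
      nlinarith [hc1, hc]
    intro a ha
    exact ⟨le_trans hinf (csInf_le hbddB ha), le_trans (le_csSup hbddA ha) hsup⟩
  -- covering of A at generation m
  have key : ∀ m, ∀ a ∈ A, ∃ x ∈ genSet c (1/(N:ℝ)) N m, x ≤ a ∧ a ≤ x + 2 * c ^ m := by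
    intro m
    induction m with
    | zero =>
        intro a ha
        refine ⟨0, by simp [genSet], (hA2 a ha).1, by simpa using (hA2 a ha).2⟩
    | succ m ih =>
        intro a ha
        have hmem := hAsub ha
        simp only [Set.mem_iUnion, Set.mem_image, Finset.mem_range] at hmem
        obtain ⟨i, hi, a', ha', hae⟩ := hmem
        obtain ⟨x, hx, hx1, hx2⟩ := ih a' ha'
        refine ⟨c * x + (i:ℝ) * (1/(N:ℝ)), ?_, ?_, ?_⟩
        · simp only [genSet, Finset.mem_image, Finset.mem_product, Finset.mem_range]
          exact ⟨⟨i, x⟩, ⟨hi, hx⟩, rfl⟩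
        · have : c * x ≤ c * a' := mul_le_mul_of_nonneg_left hx1 hc.le
          rw [← hae]
          rw [mul_one_div]
          linarith
        · rw [← hae, mul_one_div]
          have : c * a' ≤ c * (x + 2 * c ^ m) := mul_le_mul_of_nonneg_left hx2 hc.le
          have h3 : c * (x + 2 * c ^ m) = c * x + 2 * c ^ (m + 1) := by ring
          linarith
  -- choice of k₀ and δ₀
  set L2 := Real.log 2 with hL2def
  set Lc := Real.log c with hLcdef
  set k₀ : ℕ := ⌈((1 + η) * (L2 - Lc)) / L2⌉₊ + 1 with hk₀def
  refine ⟨2 * c ^ k₀, by positivity, ?_⟩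
  intro δ hδ hδ₀
  classical
  have hex : ∃ k, c ^ k < δ / 2 := exists_pow_lt_of_lt_one (by positivity) hc1
  obtain ⟨k, hkspec, hkmin⟩ : ∃ k, c ^ k < δ / 2 ∧ ∀ m < k, ¬(c ^ m < δ / 2) :=
    ⟨Nat.find hex, Nat.find_spec hex, fun m hm => Nat.find_min hex hm⟩
  have hkgt : k₀ < k := by
    by_contra h
    push_neg at h
    have h1 : c ^ k₀ ≤ c ^ k := pow_le_pow_of_le_one hc.le hc1.le h
    have h2 : δ / 2 < c ^ k₀ := by linarith
    linarith
  have hk1 : 1 ≤ k := by omega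
  have hδle : δ ≤ 2 * c ^ (k - 1) := by
    have hmin := hkmin (k - 1) (by omega)
    push_neg at hmin
    linarith
  -- the covering set
  set T := genSet c (1/(N:ℝ)) (2 * N - 1) k with hTdef
  refine ⟨T.image (fun x => x + 2 * c ^ k), ?_, ?_⟩
  · -- covering
    intro z hz
    rw [Set.mem_add] at hz
    obtain ⟨a, ha, b, hb, rfl⟩ := hz
    obtain ⟨x, hx, hx1, hx2⟩ := key k a ha
    obtain ⟨y, hy, hy1, hy2⟩ := key k b hb
    have hxy : x + y ∈ T := genSet_add c (1/(N:ℝ)) N (by omega) k x hx y hy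
    simp only [Set.mem_iUnion, Finset.mem_image]
    refine ⟨x + y + 2 * c ^ k, ⟨x + y, hxy, rfl⟩, ?_⟩
    rw [Metric.mem_closedBall, Real.dist_eq, abs_le]
    have hck : 2 * c ^ k ≤ δ := by linarith
    constructor <;> linarith
  · -- cardinality
    have hcard1 : (T.image (fun x => x + 2 * c ^ k)).card ≤ (2 * N - 1) ^ k :=
      le_trans Finset.card_image_le (genSet_card _ _ _ k)
    have hcast : (((2 * N - 1 : ℕ)) : ℝ) = 2 * (N:ℝ) - 1 := by
      have : 1 ≤ 2 * N := by omega
      push_cast [this]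
      ring
    have hcardR : ((T.image (fun x => x + 2 * c ^ k)).card : ℝ) ≤ (2 * (N:ℝ) - 1) ^ k := by
      calc ((T.image (fun x => x + 2 * c ^ k)).card : ℝ)
          ≤ (((2 * N - 1 : ℕ) ^ k : ℕ) : ℝ) := by exact_mod_cast hcard1
        _ = (2 * (N:ℝ) - 1) ^ k := by rw [Nat.cast_pow, hcast]
    have hlt : (2 * (N:ℝ) - 1) ^ k < (2 * (N:ℝ)) ^ k := by
      apply pow_lt_pow_left₀ (by linarith) (by linarith) (by omega)
    -- main estimate : (2N)^k ≤ δ ^ (-(s+η))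
    have hmain : (2 * (N:ℝ)) ^ k ≤ δ ^ (-(s + η)) := by
      have h2N : (0:ℝ) < 2 * (N:ℝ) := by linarith
      have e1 : (2 * (N:ℝ)) ^ k = Real.exp ((k:ℝ) * Real.log (2 * (N:ℝ))) := by
        rw [← Real.log_pow, Real.exp_log (pow_pos h2N k)]
      have e2 : δ ^ (-(s + η)) = Real.exp (-(s + η) * Real.log δ) := by
        rw [Real.rpow_def_of_pos hδ, mul_comm]
      rw [e1, e2, Real.exp_le_exp]
      -- log δ ≤ log 2 + (k-1) log c
      have hlogδ : Real.log δ ≤ L2 + ((k:ℝ) - 1) * Lc := by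
        have h1 : Real.log δ ≤ Real.log (2 * c ^ (k - 1)) := Real.log_le_log hδ hδle
        rw [Real.log_mul (by norm_num) (by positivity), Real.log_pow] at h1
        have hcast2 : (((k - 1 : ℕ)) : ℝ) = (k:ℝ) - 1 := by
          push_cast [hk1]
          ring
        rw [hcast2] at h1
        exact h1
      have hlog2N : Real.log (2 * (N:ℝ)) = L2 + Real.log N :=
        Real.log_mul (by norm_num) (ne_of_gt hN0)
      rw [hlog2N, hsL]
      -- key inequalities
      have hk₀le : ((k₀:ℝ)) ≤ (k:ℝ) := by exact_mod_cast hkgt.le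
      have hceil : (1 + η) * (L2 - Lc) ≤ (k₀:ℝ) * L2 := by
        have h1 : ((1 + η) * (L2 - Lc)) / L2 ≤ (⌈((1 + η) * (L2 - Lc)) / L2⌉₊ : ℝ) :=
          Nat.le_ceil _
        have h2 : ((⌈((1 + η) * (L2 - Lc)) / L2⌉₊ : ℕ) : ℝ) ≤ (k₀:ℝ) := by
          rw [hk₀def]
          push_cast
          linarith
        have h3 : ((1 + η) * (L2 - Lc)) / L2 * L2 ≤ (k₀:ℝ) * L2 :=
          mul_le_mul_of_nonneg_right (le_trans h1 h2) hlog2.le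
        rwa [div_mul_cancel₀ _ (ne_of_gt hlog2)] at h3
      have h2' : (s + η) * (L2 - Lc) ≤ (k:ℝ) * L2 := by
        have ha : (s + η) * (L2 - Lc) ≤ (1 + η) * (L2 - Lc) :=
          mul_le_mul_of_nonneg_right (by linarith) (by linarith)
        have hb : (k₀:ℝ) * L2 ≤ (k:ℝ) * L2 := mul_le_mul_of_nonneg_right hk₀le hlog2.le
        linarith
      have h3 : (k:ℝ) * (L2 + η * Lc) ≤ (k:ℝ) * (-L2) := by
        apply mul_le_mul_of_nonneg_left _ (by positivity)
        have hq : η * Lc ≤ η * (-Real.log N) := mul_le_mul_of_nonneg_left (by linarith) hη.le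
        linarith
      have hfinal : (k:ℝ) * (L2 + s * (-Lc)) ≤ -(s + η) * (L2 + ((k:ℝ) - 1) * Lc) := by
        linarith [h3, h2']
      calc (k:ℝ) * (L2 + s * (-Lc)) ≤ -(s + η) * (L2 + ((k:ℝ) - 1) * Lc) := hfinal
        _ ≤ -(s + η) * Real.log δ := by
            apply mul_le_mul_of_nonpos_left hlogδ (by linarith)
    calc ((T.image (fun x => x + 2 * c ^ k)).card : ℝ)
        ≤ (2 * (N:ℝ) - 1) ^ k := hcardR
      _ < (2 * (N:ℝ)) ^ k := hlt
      _ ≤ δ ^ (-(s + η)) := hmain
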